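/- Let p and q be primitive words. Then |p| = 2|q| and pq is non-primitive if and only if exactly one of the following holds: (i) p = x q x for some nonempty word x with xq primitive and |q| = 2|x|; (ii) there exist nonempty words α, β and an integer s ≥ 1 with αβ primitive, p = (βα)^{2s} β, q = (αβ)^s α, and |β| = 2|α|; (iii) there exist nonempty words α, β and an integer s ≥ 1 with αβ primitive, p = (βα)^{2s+1} β, q = (αβ)^s α, and |α| = 2|β|. -/
import Mathlib


variable {A : Type*}

/-- k-fold concatenation of a word with itself. -/
def pw (w : List A) : ℕ → List A
  | 0 => []
  | n + 1 => w ++ pw w n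

/-- A nonempty word is primitive if it is not a proper power. -/
def Primitive (w : List A) : Prop :=
  w ≠ [] ∧ ∀ (v : List A) (m : ℕ), w = pw v m → m = 1
/-- Condition (i): `p = x q x` with `xq` primitive and `|q| = 2|x|`. -/
def CondI (p q : List A) : Prop :=
  ∃ x : List A, x ≠ [] ∧ Primitive (x ++ q) ∧ p = x ++ q ++ x ∧ q.length = 2 * x.length

/-- Condition (ii). -/
def CondII (p q : List A) : Prop :=
  ∃ (α β : List A) (s : ℕ), α ≠ [] ∧ β ≠ [] ∧ 1 ≤ s ∧ Primitive (α ++ β) ∧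
    p = pw (β ++ α) (2 * s) ++ β ∧ q = pw (α ++ β) s ++ α ∧ β.length = 2 * α.length

/-- Condition (iii). -/
def CondIII (p q : List A) : Prop :=
  ∃ (α β : List A) (s : ℕ), α ≠ [] ∧ β ≠ [] ∧ 1 ≤ s ∧ Primitive (α ++ β) ∧
    p = pw (β ++ α) (2 * s + 1) ++ β ∧ q = pw (α ++ β) s ++ α ∧ α.length = 2 * β.length

theorem pw_zero (w : List A) : pw w 0 = [] := rfl
theorem pw_succ (w : List A) (n : ℕ) : pw w (n+1) = w ++ pw w n := rfl
theorem pw_one (w : List A) : pw w 1 = w := by simp [pw]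

theorem pw_nil (n : ℕ) : pw ([] : List A) n = [] := by
  induction n with
  | zero => rfl
  | succ n ih => simp [pw_succ, ih]

theorem pw_length (w : List A) (n : ℕ) : (pw w n).length = n * w.length := by
  induction n with
  | zero => simp [pw_zero]
  | succ n ih => simp [pw_succ, ih]; ring

theorem pw_add (w : List A) (m n : ℕ) : pw w (m + n) = pw w m ++ pw w n := by
  induction m with
  | zero => simp [pw_zero]
  | succ m ih =>
    have : m + 1 + n = (m + n) + 1 := by omega
    rw [this, pw_succ, ih, pw_succ, List.append_assoc]

theorem pw_succ' (w : List A) (n : ℕ) : pw w (n+1) = pw w n ++ w := by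
  rw [show n + 1 = n + 1 from rfl, pw_add, pw_one]

theorem pw_pw (w : List A) (j m : ℕ) : pw (pw w j) m = pw w (j * m) := by
  induction m with
  | zero => simp [pw_zero]
  | succ m ih => rw [pw_succ, ih, show j * (m+1) = j + j * m by ring, pw_add]

theorem pw_shift (w u : List A) (n : ℕ) :
    w ++ pw (u ++ w) n = pw (w ++ u) n ++ w := by
  induction n with
  | zero => simp [pw_zero]
  | succ n ih =>
    rw [pw_succ, pw_succ]
    calc w ++ ((u ++ w) ++ pw (u ++ w) n) = (w ++ u) ++ (w ++ pw (u ++ w) n) := by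
          simp [List.append_assoc]
      _ = (w ++ u) ++ (pw (w ++ u) n ++ w) := by rw [ih]
      _ = ((w ++ u) ++ pw (w ++ u) n) ++ w := by simp [List.append_assoc]

theorem pw_ne_nil {w : List A} (hw : w ≠ []) {n : ℕ} (hn : n ≠ 0) : pw w n ≠ [] := by
  intro h
  have := congrArg List.length h
  rw [pw_length] at this
  simp [hw] at this
  exact hn this

theorem eq_nil_of_pw_eq_nil {w : List A} {n : ℕ} (hn : n ≠ 0) (h : pw w n = []) : w = [] := by
  by_contra hw
  exact pw_ne_nil hw hn h

theorem pw_take (w : List A) {n : ℕ} (hn : 1 ≤ n) : (pw w n).take w.length = w := by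
  obtain ⟨m, rfl⟩ : ∃ m, n = m + 1 := ⟨n - 1, by omega⟩
  rw [pw_succ, List.take_left]

/-- commuting words are powers of a common word -/
theorem comm_pw : ∀ (u v : List A), u ++ v = v ++ u →
    ∃ (t : List A) (a b : ℕ), u = pw t a ∧ v = pw t b := by
  have key : ∀ (N : ℕ) (u v : List A), u.length + v.length ≤ N → u.length ≤ v.length →
      u ++ v = v ++ u → ∃ (t : List A) (a b : ℕ), u = pw t a ∧ v = pw t b := by
    intro N
    induction N with
    | zero =>
      intro u v h1 _ _
      have hu : u = [] := by
        apply List.length_eq_zero_iff.mp; omega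
      have hv : v = [] := by
        apply List.length_eq_zero_iff.mp; omega
      exact ⟨[], 0, 0, by simp [hu, hv, pw_zero]⟩
    | succ N ih =>
      intro u v hN hle hcomm
      rcases eq_or_ne u [] with rfl | hu
      · exact ⟨v, 0, 1, by simp [pw_zero, pw_one]⟩
      · -- u is a prefix of v
        have hpre : u <+: v := by
          apply List.prefix_of_prefix_length_le (l₃ := u ++ v)
          · exact List.prefix_append u v
          · rw [hcomm]; exact List.prefix_append v u
          · exact hle
        obtain ⟨w, rfl⟩ := hpre
        have hulen : 1 ≤ u.length := by
          have := List.length_pos_iff.mpr hu; omega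
        have hcomm' : u ++ w = w ++ u := by
          have : u ++ (u ++ w) = u ++ (w ++ u) := by
            have := hcomm
            simp only [List.append_assoc] at this ⊢
            exact this
          exact List.append_cancel_left this
        rcases le_or_gt u.length w.length with h | h
        · obtain ⟨t, a, b, hu', hw'⟩ := ih u w (by simp at hN ⊢; omega) h hcomm'
          exact ⟨t, a, a + b, hu', by rw [pw_add, hu', hw']⟩
        · obtain ⟨t, a, b, hw', hu'⟩ := ih w u (by simp at hN ⊢; omega) (le_of_lt h)
            hcomm'.symm
          exact ⟨t, b, b + a, hu', by rw [pw_add, hw', hu']⟩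
  intro u v hcomm
  rcases le_or_gt u.length v.length with h | h
  · exact key (u.length + v.length) u v le_rfl h hcomm
  · obtain ⟨t, a, b, h1, h2⟩ := key (v.length + u.length) v u le_rfl (le_of_lt h) hcomm.symm
    exact ⟨t, b, a, h2, h1⟩

/-- equal nonempty powers commute -/
theorem comm_of_pw_eq_pw {u v : List A} {m n : ℕ} (hm : 1 ≤ m) (hn : 1 ≤ n)
    (h : pw u m = pw v n) : u ++ v = v ++ u := by
  rcases eq_or_ne u [] with rfl | hu
  · rw [pw_nil] at h
    have hv : v = [] := eq_nil_of_pw_eq_nil (by omega) h.symm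
    simp [hv]
  rcases eq_or_ne v [] with rfl | hv
  · rw [pw_nil] at h
    have hu' : u = [] := eq_nil_of_pw_eq_nil (by omega) h
    simp [hu']
  -- WLOG via an auxiliary claim
  have key : ∀ (u v : List A) (m n : ℕ), 1 ≤ m → 1 ≤ n → u ≠ [] → v ≠ [] →
      u.length ≤ v.length → pw u m = pw v n → u ++ v = v ++ u := by
    intro u v m n hm hn hu hv hle h
    -- u is a prefix of v
    have hupre : u <+: pw v n := by
      rw [← h]
      obtain ⟨m', rfl⟩ : ∃ m', m = m' + 1 := ⟨m - 1, by omega⟩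
      exact ⟨pw u m', rfl⟩
    have hvpre : v <+: pw v n := by
      obtain ⟨n', rfl⟩ : ∃ n', n = n' + 1 := ⟨n - 1, by omega⟩
      exact ⟨pw v n', rfl⟩
    have hpre : u <+: v := List.prefix_of_prefix_length_le hupre hvpre hle
    obtain ⟨w, rfl⟩ := hpre
    -- show pw (u++w) n = pw (w++u) n
    obtain ⟨n', rfl⟩ : ∃ n', n = n' + 1 := ⟨n - 1, by omega⟩
    obtain ⟨m', rfl⟩ : ∃ m', m = m' + 1 := ⟨m - 1, by omega⟩
    have h1 : pw (u ++ w) (n' + 1) = u ++ (pw (w ++ u) n' ++ w) := by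
      rw [pw_succ, ← pw_shift]
      simp [List.append_assoc]
    have h2 : pw u m' = pw (w ++ u) n' ++ w := by
      apply List.append_cancel_left (as := u)
      rw [← h1, ← h, pw_succ]
    have h3 : pw u (m' + 1) = pw (w ++ u) (n' + 1) := by
      rw [pw_succ', h2, pw_succ']
      simp [List.append_assoc]
    -- now take prefixes of length (u++w).length
    have huw : u ++ w = w ++ u := by
      have e1 : (pw (u ++ w) (n' + 1)).take (u ++ w).length = u ++ w :=
        pw_take _ (by omega)
      have e2 : (pw (w ++ u) (n' + 1)).take (w ++ u).length = w ++ u :=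
        pw_take _ (by omega)
      rw [← h, h3] at e1
      have hlen : (u ++ w).length = (w ++ u).length := by simp [Nat.add_comm]
      rw [hlen, e2] at e1
      exact e1.symm
    calc u ++ (u ++ w) = u ++ (w ++ u) := by rw [huw]
      _ = (u ++ w) ++ u := by simp [List.append_assoc]
  rcases le_or_gt u.length v.length with hle | hlt
  · exact key u v m n hm hn hu hv hle h
  · exact (key v u n m hn hm hv hu (le_of_lt hlt) h.symm).symm

/-- uniqueness of primitive root and exponent -/
theorem primitive_pw_eq_pw {u v : List A} {m n : ℕ} (hu : Primitive u) (hv : Primitive v)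
    (hm : 1 ≤ m) (hn : 1 ≤ n) (h : pw u m = pw v n) : u = v ∧ m = n := by
  have hcomm := comm_of_pw_eq_pw hm hn h
  obtain ⟨t, a, b, ha, hb⟩ := comm_pw u v hcomm
  have ha1 : a = 1 := hu.2 t a ha
  have hb1 : b = 1 := hv.2 t b hb
  rw [ha1, pw_one] at ha
  rw [hb1, pw_one] at hb
  have huv : u = v := by rw [ha, hb]
  refine ⟨huv, ?_⟩
  have hlen := congrArg List.length h
  rw [pw_length, pw_length, huv] at hlen
  have hv0 : v.length ≠ 0 := fun h0 => hv.1 (List.length_eq_zero_iff.mp h0)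
  exact Nat.eq_of_mul_eq_mul_right (by omega) hlen

/-- primitive root existence -/
theorem exists_primitive_root : ∀ (w : List A), w ≠ [] →
    ∃ (v : List A) (k : ℕ), Primitive v ∧ 1 ≤ k ∧ w = pw v k := by
  have key : ∀ (N : ℕ) (w : List A), w.length ≤ N → w ≠ [] →
      ∃ (v : List A) (k : ℕ), Primitive v ∧ 1 ≤ k ∧ w = pw v k := by
    intro N
    induction N with
    | zero =>
      intro w h1 h2
      exact absurd (List.length_eq_zero_iff.mp (by omega)) h2
    | succ N ih =>
      intro w hN hw
      by_cases hprim : Primitive w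
      · exact ⟨w, 1, hprim, le_rfl, (pw_one w).symm⟩
      · simp only [Primitive, not_and, not_forall] at hprim
        obtain ⟨u, m, hum, hm1⟩ := hprim hw
        have hm0 : m ≠ 0 := by
          rintro rfl
          exact hw hum
        have hu : u ≠ [] := by
          intro h0
          rw [h0, pw_nil] at hum
          exact hw hum
        have hm2 : 2 ≤ m := by omega
        have hulen : u.length < w.length := by
          have := congrArg List.length hum
          rw [pw_length] at this
          have h0 : 1 ≤ u.length := List.length_pos_iff.mpr hu
          nlinarith
        obtain ⟨v', k, hv', hk, huv⟩ := ih u (by omega) hu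
        exact ⟨v', k * m, hv', by nlinarith, by rw [hum, huv, pw_pw]⟩
  intro w hw
  exact key w.length w le_rfl hw

/-- rotation lemma -/
theorem pw_rotation {x y z : List A} {m : ℕ} (h : x ++ y = pw z m) :
    ∃ z' : List A, z'.length = z.length ∧ y ++ x = pw z' m := by
  rcases eq_or_ne z [] with rfl | hz
  · rw [pw_nil] at h
    rw [List.append_eq_nil_iff] at h
    refine ⟨[], rfl, ?_⟩
    rw [h.1, h.2, pw_nil]
    rfl
  have hL0 : 0 < z.length := List.length_pos_iff.mpr hz
  obtain ⟨a, d, hxlen, hdL⟩ : ∃ a d, x.length = a * z.length + d ∧ d < z.length := by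
    refine ⟨x.length / z.length, x.length % z.length, ?_, Nat.mod_lt _ hL0⟩
    rw [Nat.mul_comm]
    exact (Nat.div_add_mod _ _).symm
  have hsum : x.length + y.length = m * z.length := by
    have := congrArg List.length h
    simpa [pw_length, Nat.mul_comm] using this
  rcases Nat.eq_zero_or_pos d with hd0 | hd0
  · -- x = pw z a, y = pw z (m - a)
    subst hd0
    have ham : a ≤ m := by nlinarith
    have hsplit : pw z m = pw z a ++ pw z (m - a) := by
      rw [← pw_add]; congr 1; omega
    have hx : x = pw z a := by
      have h2 : x ++ y = pw z a ++ pw z (m - a) := by rw [h, ← hsplit]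
      have hl : x.length = (pw z a).length := by rw [pw_length]; omega
      exact (List.append_inj h2 hl).1
    have hy : y = pw z (m - a) := by
      have h2 : x ++ y = pw z a ++ pw z (m - a) := by rw [h, ← hsplit]
      rw [hx] at h2
      exact List.append_cancel_left h2
    refine ⟨z, rfl, ?_⟩
    rw [hx, hy, ← pw_add]
    congr 1; omega
  · -- d > 0, so a < m
    have ham : a < m := by nlinarith
    obtain ⟨b, hb⟩ : ∃ b, m = a + 1 + b := ⟨m - a - 1, by omega⟩
    subst hb
    set r := z.take d with hr
    set t := z.drop d with ht
    have hrt : z = r ++ t := (List.take_append_drop d z).symm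
    have hrlen : r.length = d := by rw [hr, List.length_take]; omega
    have htlen : t.length = z.length - d := by rw [ht, List.length_drop]
    have hsplit : pw z (a + 1 + b) = (pw z a ++ r) ++ (t ++ pw z b) := by
      rw [pw_add, pw_succ']
      nth_rewrite 2 [hrt]
      simp [List.append_assoc]
    have hx : x = pw z a ++ r := by
      have h2 : x ++ y = (pw z a ++ r) ++ (t ++ pw z b) := by rw [h, hsplit]
      have hl : x.length = (pw z a ++ r).length := by
        simp [pw_length, hrlen]; omega
      exact (List.append_inj h2 hl).1
    have hy : y = t ++ pw z b := by
      have h2 : x ++ y = (pw z a ++ r) ++ (t ++ pw z b) := by rw [h, hsplit]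
      rw [hx] at h2
      exact List.append_cancel_left h2
    refine ⟨t ++ r, by rw [List.length_append, hrlen, htlen]; omega, ?_⟩
    rw [hx, hy]
    calc (t ++ pw z b) ++ (pw z a ++ r)
        = t ++ (pw z b ++ pw z a) ++ r := by simp [List.append_assoc]
      _ = t ++ pw z (b + a) ++ r := by rw [← pw_add]
      _ = t ++ pw (r ++ t) (b + a) ++ r := by rw [← hrt]
      _ = (pw (t ++ r) (b + a) ++ t) ++ r := by
            have := pw_shift t r (b + a)
            rw [← this]
      _ = pw (t ++ r) (b + a) ++ (t ++ r) := by simp [List.append_assoc]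
      _ = pw (t ++ r) (a + 1 + b) := by rw [← pw_succ']; congr 1; omega

/-- conjugate of a primitive word is primitive -/
theorem primitive_conj {x y : List A} (h : Primitive (x ++ y)) : Primitive (y ++ x) := by
  constructor
  · intro h0
    rw [List.append_eq_nil_iff] at h0
    exact h.1 (by rw [h0.1, h0.2]; rfl)
  · intro z m hzm
    obtain ⟨z', _, hz'⟩ := pw_rotation hzm
    exact h.2 z' m hz'

theorem condI_pq {p q : List A} (h : CondI p q) :
    p.length = 2 * q.length ∧ ∃ v : List A, Primitive v ∧ p ++ q = pw v 2 := by
  obtain ⟨x, hx, hprim, hpx, hql⟩ := h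
  constructor
  · subst hpx; simp [hql]; omega
  · refine ⟨x ++ q, hprim, ?_⟩
    subst hpx
    simp [pw, List.append_assoc]

theorem condII_pq {p q : List A} (h : CondII p q) :
    p.length = 2 * q.length ∧
      ∃ (v : List A) (s : ℕ), 1 ≤ s ∧ Primitive v ∧ p ++ q = pw v (3 * s + 1) := by
  obtain ⟨α, β, s, hα, hβ, hs, hprim, hp, hq, hlen⟩ := h
  have hshift : β ++ pw (α ++ β) s = pw (β ++ α) s ++ β := pw_shift β α s
  have hpq : p ++ q = pw (β ++ α) (3 * s + 1) := by
    rw [hp, hq]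
    calc (pw (β ++ α) (2 * s) ++ β) ++ (pw (α ++ β) s ++ α)
        = pw (β ++ α) (2 * s) ++ (β ++ pw (α ++ β) s) ++ α := by simp [List.append_assoc]
      _ = pw (β ++ α) (2 * s) ++ (pw (β ++ α) s ++ β) ++ α := by rw [hshift]
      _ = (pw (β ++ α) (2 * s) ++ pw (β ++ α) s) ++ (β ++ α) := by simp [List.append_assoc]
      _ = (pw (β ++ α) (2 * s) ++ pw (β ++ α) s) ++ pw (β ++ α) 1 := by rw [pw_one]
      _ = pw (β ++ α) (3 * s + 1) := by rw [← pw_add, ← pw_add]; congr 1; omega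
  constructor
  · rw [hp, hq]
    simp [pw_length, hlen]
    ring
  · exact ⟨β ++ α, s, hs, primitive_conj hprim, hpq⟩

theorem condIII_pq {p q : List A} (h : CondIII p q) :
    p.length = 2 * q.length ∧
      ∃ (v : List A) (s : ℕ), 1 ≤ s ∧ Primitive v ∧ p ++ q = pw v (3 * s + 2) := by
  obtain ⟨α, β, s, hα, hβ, hs, hprim, hp, hq, hlen⟩ := h
  have hshift : β ++ pw (α ++ β) s = pw (β ++ α) s ++ β := pw_shift β α s
  have hpq : p ++ q = pw (β ++ α) (3 * s + 2) := by
    rw [hp, hq]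
    calc (pw (β ++ α) (2 * s + 1) ++ β) ++ (pw (α ++ β) s ++ α)
        = pw (β ++ α) (2 * s + 1) ++ (β ++ pw (α ++ β) s) ++ α := by simp [List.append_assoc]
      _ = pw (β ++ α) (2 * s + 1) ++ (pw (β ++ α) s ++ β) ++ α := by rw [hshift]
      _ = (pw (β ++ α) (2 * s + 1) ++ pw (β ++ α) s) ++ (β ++ α) := by
            simp [List.append_assoc]
      _ = (pw (β ++ α) (2 * s + 1) ++ pw (β ++ α) s) ++ pw (β ++ α) 1 := by rw [pw_one]
      _ = pw (β ++ α) (3 * s + 2) := by rw [← pw_add, ← pw_add]; congr 1; omega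
  constructor
  · rw [hp, hq]
    simp [pw_length, hlen]
    ring
  · exact ⟨β ++ α, s, hs, primitive_conj hprim, hpq⟩

theorem not_I_II {p q : List A} : ¬ (CondI p q ∧ CondII p q) := by
  rintro ⟨h1, h2⟩
  obtain ⟨_, v, hv, hpq⟩ := condI_pq h1
  obtain ⟨_, v', s, hs, hv', hpq'⟩ := condII_pq h2
  have := (primitive_pw_eq_pw hv hv' (by omega) (by omega) (hpq ▸ hpq' ▸ rfl : pw v 2 = pw v' (3 * s + 1))).2
  omega

theorem not_I_III {p q : List A} : ¬ (CondI p q ∧ CondIII p q) := by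
  rintro ⟨h1, h2⟩
  obtain ⟨_, v, hv, hpq⟩ := condI_pq h1
  obtain ⟨_, v', s, hs, hv', hpq'⟩ := condIII_pq h2
  have := (primitive_pw_eq_pw hv hv' (by omega) (by omega) (hpq ▸ hpq' ▸ rfl : pw v 2 = pw v' (3 * s + 2))).2
  omega

theorem not_II_III {p q : List A} : ¬ (CondII p q ∧ CondIII p q) := by
  rintro ⟨h1, h2⟩
  obtain ⟨_, v, s, hs, hv, hpq⟩ := condII_pq h1
  obtain ⟨_, v', s', hs', hv', hpq'⟩ := condIII_pq h2
  have := (primitive_pw_eq_pw hv hv' (by omega) (by omega)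
    (hpq ▸ hpq' ▸ rfl : pw v (3 * s + 1) = pw v' (3 * s' + 2))).2
  omega

theorem p_eq_two_q_nonprimitive_characterization (p q : List A)
    (hp : Primitive p) (hq : Primitive q) :
    (p.length = 2 * q.length ∧ ¬ Primitive (p ++ q)) ↔
      ((CondI p q ∨ CondII p q ∨ CondIII p q) ∧
        ¬ (CondI p q ∧ CondII p q) ∧ ¬ (CondI p q ∧ CondIII p q) ∧
        ¬ (CondII p q ∧ CondIII p q)) := by
  constructor
  · rintro ⟨hlen, hnp⟩
    refine ⟨?_, not_I_II, not_I_III, not_II_III⟩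
    have hpq_ne : p ++ q ≠ [] := by simp [hp.1]
    have hex : ∃ u m, (p ++ q) = pw u m ∧ m ≠ 1 := by
      by_contra hcon
      push_neg at hcon
      exact hnp ⟨hpq_ne, fun v m h => hcon v m h⟩
    obtain ⟨u, m, hum, hm1⟩ := hex
    have hm0 : m ≠ 0 := by rintro rfl; exact hpq_ne hum
    have hu_ne : u ≠ [] := fun h0 => hpq_ne (by rw [hum, h0, pw_nil])
    obtain ⟨t, j, ht, hj, huj⟩ := exists_primitive_root u hu_ne
    obtain ⟨k, hk2, hpq⟩ : ∃ k, 2 ≤ k ∧ p ++ q = pw t k :=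
      ⟨j * m, by have hm2 : 2 ≤ m := (by omega); nlinarith, by rw [hum, huj, pw_pw]⟩
    have ht_ne : t ≠ [] := ht.1
    have hL0 : 0 < t.length := List.length_pos_iff.mpr ht_ne
    have hsum : k * t.length = 3 * q.length := by
      have h0 := congrArg List.length hpq
      rw [List.length_append, pw_length] at h0
      omega
    have hk3 : k % 3 = 0 ∨ k % 3 = 1 ∨ k % 3 = 2 := by omega
    rcases hk3 with hk3 | hk3 | hk3
    · -- k = 3c : contradiction with primitivity of p
      exfalso
      obtain ⟨c, hc⟩ : ∃ c, k = 3 * c := ⟨k / 3, by omega⟩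
      have hc1 : 1 ≤ c := by omega
      rw [hc] at hsum
      have h1 : 3 * (c * t.length) = 3 * q.length := by rw [← hsum]; ring
      have hQ : q.length = c * t.length := by omega
      have hsplit : pw t (3 * c) = pw t (2 * c) ++ pw t c := by
        rw [← pw_add]; congr 1; omega
      have hplen2 : p.length = (pw t (2 * c)).length := by
        rw [pw_length]
        have : (2 * c) * t.length = 2 * (c * t.length) := by ring
        omega
      have hpeq : p = pw t (2 * c) :=
        (List.append_inj ((hc ▸ hpq).trans hsplit) hplen2).1
      have := hp.2 t (2 * c) hpeq
      omega
    · -- k = 3s+1 : CondII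
      obtain ⟨s, hc⟩ : ∃ s, k = 3 * s + 1 := ⟨k / 3, by omega⟩
      have hs1 : 1 ≤ s := by omega
      rw [hc] at hsum hpq
      have key : 3 * (s * t.length) + t.length = 3 * q.length := by
        have h1 : (3 * s + 1) * t.length = 3 * (s * t.length) + t.length := by ring
        omega
      obtain ⟨c, hcL⟩ : ∃ c, t.length = 3 * c := by
        have h3 : (3:ℕ) ∣ t.length := by omega
        exact h3
      have hc1 : 1 ≤ c := by omega
      have h2 : s * t.length = 3 * (s * c) := by rw [hcL]; ring
      have hQ : q.length = 3 * (s * c) + c := by omega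
      set β := t.take (2 * c) with hβ
      set α := t.drop (2 * c) with hα
      have hβα : β ++ α = t := List.take_append_drop _ t
      have hβl : β.length = 2 * c := by rw [hβ, List.length_take]; omega
      have hαl : α.length = c := by rw [hα, List.length_drop]; omega
      have hid : (pw (β ++ α) (2 * s) ++ β) ++ (pw (α ++ β) s ++ α) = pw t (3 * s + 1) := by
        rw [← hβα]
        calc (pw (β ++ α) (2 * s) ++ β) ++ (pw (α ++ β) s ++ α)
            = pw (β ++ α) (2 * s) ++ (β ++ pw (α ++ β) s) ++ α := by
              simp [List.append_assoc]
          _ = pw (β ++ α) (2 * s) ++ (pw (β ++ α) s ++ β) ++ α := by rw [pw_shift]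
          _ = (pw (β ++ α) (2 * s) ++ pw (β ++ α) s) ++ pw (β ++ α) 1 := by
              rw [pw_one]; simp [List.append_assoc]
          _ = pw (β ++ α) (3 * s + 1) := by rw [← pw_add, ← pw_add]; congr 1; omega
      have hplen2 : p.length = (pw (β ++ α) (2 * s) ++ β).length := by
        rw [List.length_append, pw_length, List.length_append, hβl, hαl]
        have h3 : 2 * s * (2 * c + c) = 6 * (s * c) := by ring
        omega
      obtain ⟨hpeq, hqeq⟩ := List.append_inj (hpq.trans hid.symm) hplen2
      refine Or.inr (Or.inl ⟨α, β, s, ?_, ?_, hs1, ?_, hpeq, hqeq, ?_⟩)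
      · intro h0; rw [h0] at hαl; simp at hαl; omega
      · intro h0; rw [h0] at hβl; simp at hβl; omega
      · apply primitive_conj (x := β) (y := α)
        rw [hβα]; exact ht
      · rw [hβl, hαl]
    · -- k = 3s+2
      obtain ⟨s, hc⟩ : ∃ s, k = 3 * s + 2 := ⟨k / 3, by omega⟩
      rw [hc] at hsum hpq
      rcases Nat.eq_zero_or_pos s with hs0 | hs1
      · -- k = 2 : CondI
        subst hs0
        simp only [Nat.mul_zero, Nat.zero_add] at hsum hpq
        obtain ⟨n, hn⟩ : ∃ n, t.length = 3 * n := by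
          have h3 : (3:ℕ) ∣ t.length := by omega
          exact h3
        have hn1 : 1 ≤ n := by omega
        have hQ : q.length = 2 * n := by omega
        set x := t.take n with hx
        set y := t.drop n with hy
        have hxy : x ++ y = t := List.take_append_drop _ t
        have hxl : x.length = n := by rw [hx, List.length_take]; omega
        have hyl : y.length = 2 * n := by rw [hy, List.length_drop]; omega
        have hid : ((x ++ y) ++ x) ++ y = pw t 2 := by
          rw [← hxy]
          simp [pw, List.append_assoc]
        have hplen2 : p.length = ((x ++ y) ++ x).length := by
          simp [hxl, hyl]; omega
        obtain ⟨hpeq, hqeq⟩ := List.append_inj (hpq.trans hid.symm) hplen2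
        refine Or.inl ⟨x, ?_, ?_, ?_, ?_⟩
        · intro h0; rw [h0] at hxl; simp at hxl; omega
        · rw [hqeq, hxy]; exact ht
        · rw [hqeq]; exact hpeq
        · rw [hqeq, hyl, hxl]
      · -- CondIII
        have key : 3 * (s * t.length) + 2 * t.length = 3 * q.length := by
          have h1 : (3 * s + 2) * t.length = 3 * (s * t.length) + 2 * t.length := by ring
          omega
        obtain ⟨b, hb⟩ : ∃ b, t.length = 3 * b := by
          have h3 : (3:ℕ) ∣ t.length := by omega
          exact h3
        have hb1 : 1 ≤ b := by omega
        have h2 : s * t.length = 3 * (s * b) := by rw [hb]; ring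
        have hQ : q.length = 3 * (s * b) + 2 * b := by omega
        set β := t.take b with hβ
        set α := t.drop b with hα
        have hβα : β ++ α = t := List.take_append_drop _ t
        have hβl : β.length = b := by rw [hβ, List.length_take]; omega
        have hαl : α.length = 2 * b := by rw [hα, List.length_drop]; omega
        have hid : (pw (β ++ α) (2 * s + 1) ++ β) ++ (pw (α ++ β) s ++ α)
            = pw t (3 * s + 2) := by
          rw [← hβα]
          calc (pw (β ++ α) (2 * s + 1) ++ β) ++ (pw (α ++ β) s ++ α)
              = pw (β ++ α) (2 * s + 1) ++ (β ++ pw (α ++ β) s) ++ α := by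
                simp [List.append_assoc]
            _ = pw (β ++ α) (2 * s + 1) ++ (pw (β ++ α) s ++ β) ++ α := by rw [pw_shift]
            _ = (pw (β ++ α) (2 * s + 1) ++ pw (β ++ α) s) ++ pw (β ++ α) 1 := by
                rw [pw_one]; simp [List.append_assoc]
            _ = pw (β ++ α) (3 * s + 2) := by rw [← pw_add, ← pw_add]; congr 1; omega
        have hplen2 : p.length = (pw (β ++ α) (2 * s + 1) ++ β).length := by
          rw [List.length_append, pw_length, List.length_append, hβl, hαl]
          have h3 : (2 * s + 1) * (b + 2 * b) = 6 * (s * b) + 3 * b := by ring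
          omega
        obtain ⟨hpeq, hqeq⟩ := List.append_inj (hpq.trans hid.symm) hplen2
        refine Or.inr (Or.inr ⟨α, β, s, ?_, ?_, hs1, ?_, hpeq, hqeq, ?_⟩)
        · intro h0; rw [h0] at hαl; simp at hαl; omega
        · intro h0; rw [h0] at hβl; simp at hβl; omega
        · apply primitive_conj (x := β) (y := α)
          rw [hβα]; exact ht
        · rw [hβl, hαl]
  · rintro ⟨h, -, -, -⟩
    rcases h with h | h | h
    · obtain ⟨hl, v, hv, hpq⟩ := condI_pq h
      exact ⟨hl, fun hPrim => by have := hPrim.2 v 2 hpq; omega⟩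
    · obtain ⟨hl, v, s, hs, hv, hpq⟩ := condII_pq h
      exact ⟨hl, fun hPrim => by have := hPrim.2 v (3 * s + 1) hpq; omega⟩
    · obtain ⟨hl, v, s, hs, hv, hpq⟩ := condIII_pq h
      exact ⟨hl, fun hPrim => by have := hPrim.2 v (3 * s + 2) hpq; omega⟩
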